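/- Let w = w(n) be a function with w(n) → ∞ as n → ∞, and let p = p(n) satisfy (ln n + ln ln n + w(n))/n ≤ p(n) ≤ 10·ln n / n. Then whp the random graph G ~ G(n,p(n)) contains no two cycles, each of length at most ln n / (4·ln(n·p(n))), which share exactly one vertex. -/

import Mathlib

/-!
First moment method. If two cycles of lengths `k₁, k₂ ≤ L` share exactly one vertex `v`,
rotating both to start at `v` gives two closed walks of the complete graph at `v` whose
`k₁ + k₂` edges are distinct and all present. There are at most `n · n^(k₁-1) · n^(k₂-1)` such
pairs of walks, each present with probability `p^(k₁+k₂)`, so the probability is at most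
`(∑_{k ≤ L} (np)^k)² / n ≤ L² (np)^(2L) / n`. For `L = ln n / (4 ln(np))` this is at most
`(ln n)² √n / n`, which tends to `0`.
-/

open MeasureTheory Filter

/-- The Bernoulli measure on `Bool` with success probability `p`. -/
noncomputable def bernoulliBool (p : ℝ) : Measure Bool :=
  (ENNReal.ofReal p) • Measure.dirac true + (ENNReal.ofReal (1 - p)) • Measure.dirac false

/-- The binomial random graph measure `G(n,p)`: each potential edge (pair of distinct
vertices of `Fin n`) is present independently with probability `p`. An outcome is an
indicator function on unordered pairs. -/
noncomputable def gnp (n : ℕ) (p : ℝ) : Measure (Sym2 (Fin n) → Bool) :=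
  Measure.pi fun _ => bernoulliBool p

/-- The simple graph on `[n]` determined by an outcome `ω` of `G(n,p)`. -/
def graphOf {n : ℕ} (ω : Sym2 (Fin n) → Bool) : SimpleGraph (Fin n) where
  Adj v w := v ≠ w ∧ ω s(v, w) = true
  symm := by
    constructor
    intro v w h
    exact ⟨h.1.symm, by rw [Sym2.eq_swap]; exact h.2⟩
  loopless := by
    constructor
    intro v h
    exact h.1 rfl

instance graphOfDecidableAdj {n : ℕ} (ω : Sym2 (Fin n) → Bool) :
    DecidableRel (graphOf ω).Adj :=
  fun v w => inferInstanceAs (Decidable (v ≠ w ∧ ω s(v, w) = true))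

open Finset SimpleGraph Topology
open scoped ENNReal

namespace SimpleGraph

variable {V : Type*}

def HasShortCyclesSharingOneVertex [DecidableEq V] (G : SimpleGraph V) (L : ℝ) : Prop :=
  ∃ (a b : V) (c₁ : G.Walk a a) (c₂ : G.Walk b b), c₁.IsCycle ∧ c₂.IsCycle ∧
    (c₁.length : ℝ) ≤ L ∧ (c₂.length : ℝ) ≤ L ∧
    #(c₁.support.toFinset ∩ c₂.support.toFinset) = 1

variable {G : SimpleGraph V}

section WalkCount

variable [DecidableEq V] [G.LocallyFinite]

def finsetWalkLengthPosLE (M : ℕ) (u v : V) : Finset (G.Walk u v) :=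
  (range M).biUnion fun k => G.finsetWalkLength (k + 1) u v

theorem mem_finsetWalkLengthPosLE_iff {M : ℕ} {u v : V} {d : G.Walk u v} :
    d ∈ G.finsetWalkLengthPosLE M u v ↔ 0 < d.length ∧ d.length ≤ M := by
  simp only [finsetWalkLengthPosLE, Finset.mem_biUnion, Finset.mem_range,
    mem_finsetWalkLength_iff]
  exact ⟨fun ⟨k, hk, hd⟩ => by omega, fun h => ⟨d.length - 1, by omega, by omega⟩⟩

theorem card_finsetWalkLength_succ_le [Fintype V] (k : ℕ) (u v : V) :
 #(G.finsetWalkLength (k + 1) u v) ≤ Fintype.card V ^ k := by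
  induction k generalizing u with
  | zero =>
    refine Finset.card_le_one.2 fun c hc d hd => ?_
    rw [mem_finsetWalkLength_iff] at hc hd
    rcases c with _ | ⟨_, _ | _⟩ <;> rcases d with _ | ⟨_, _ | _⟩ <;> simp_all
  | succ k ih =>
    rw [finsetWalkLength]
    calc _ ≤ ∑ w : G.neighborSet u, #((G.finsetWalkLength (k + 1) w v).map _) :=
          Finset.card_biUnion_le
      _ ≤ ∑ _w : G.neighborSet u, Fintype.card V ^ k := by
          gcongr with w; rw [Finset.card_map]; exact ih w
      _ ≤ Fintype.card V ^ (k + 1) := by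
          rw [Finset.sum_const, Finset.card_univ, smul_eq_mul, pow_succ']
          gcongr
          exact set_fintype_card_le_univ _

theorem sum_pow_length_finsetWalkLengthPosLE_le [Fintype V] (M : ℕ) (u v : V) (q : ℝ≥0∞) :
    ∑ d ∈ G.finsetWalkLengthPosLE M u v, q ^ d.length
      ≤ ∑ k ∈ range M, (Fintype.card V : ℝ≥0∞) ^ k * q ^ (k + 1) := by
  have hdisj : (range M : Set ℕ).PairwiseDisjoint fun k => G.finsetWalkLength (k + 1) u v :=
    fun k _ l _ hkl => Finset.disjoint_left.2 fun d hk hl => hkl <| by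
      rw [mem_finsetWalkLength_iff] at hk hl
      omega
  rw [finsetWalkLengthPosLE, Finset.sum_biUnion hdisj]
  gcongr with k
  calc ∑ d ∈ G.finsetWalkLength (k + 1) u v, q ^ d.length
      = #(G.finsetWalkLength (k + 1) u v) * q ^ (k + 1) := by
        rw [Finset.sum_congr rfl fun d hd => by rw [mem_finsetWalkLength_iff.1 hd],
          Finset.sum_const, nsmul_eq_mul]
    _ ≤ Fintype.card V ^ k * q ^ (k + 1) := by
        gcongr
        exact_mod_cast card_finsetWalkLength_succ_le k u v

end WalkCount

theorem Walk.edges_disjoint_of_card_inter_support_le_one [DecidableEq V] {u v u' v' : V}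
    (c : G.Walk u v) (d : G.Walk u' v') (h : #(c.support.toFinset ∩ d.support.toFinset) ≤ 1) :
    c.edges.Disjoint d.edges := by
  intro e hc hd
  induction e using Sym2.ind with
  | _ x y =>
  have hmem : ∀ z ∈ [x, y], z ∈ c.support.toFinset ∩ d.support.toFinset := by
    simp only [List.mem_cons, List.not_mem_nil, or_false, Finset.mem_inter, List.mem_toFinset]
    rintro z (rfl | rfl)
    · exact ⟨c.fst_mem_support_of_mem_edges hc, d.fst_mem_support_of_mem_edges hd⟩
    · exact ⟨c.snd_mem_support_of_mem_edges hc, d.snd_mem_support_of_mem_edges hd⟩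
  have hxy : x = y := Finset.card_le_one.1 h x (hmem x (by simp)) y (hmem y (by simp))
  exact G.not_isDiag_of_mem_edgeSet (c.edges_subset_edgeSet hc) (Sym2.mk_isDiag_iff.2 hxy)

theorem exists_cycles_at_common_vertex [DecidableEq V] {a b : V} {c₁ : G.Walk a a}
    {c₂ : G.Walk b b} (hc₁ : c₁.IsCycle) (hc₂ : c₂.IsCycle)
    (h : #(c₁.support.toFinset ∩ c₂.support.toFinset) = 1) :
    ∃ (v : V) (d₁ d₂ : G.Walk v v), d₁.IsCycle ∧ d₂.IsCycle ∧ d₁.length = c₁.length ∧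
      d₂.length = c₂.length ∧ (d₁.edges ++ d₂.edges).Nodup := by
  obtain ⟨v, hv⟩ := Finset.card_eq_one.1 h
  have hv' : v ∈ c₁.support ∧ v ∈ c₂.support := by
    simpa using Finset.ext_iff.1 hv v
  have hrot₁ := c₁.rotate_edges v hv'.1
  have hrot₂ := c₂.rotate_edges v hv'.2
  refine ⟨v, c₁.rotate v hv'.1, c₂.rotate v hv'.2, hc₁.rotate hv'.1, hc₂.rotate hv'.2, ?_, ?_, ?_⟩
  · rw [← Walk.length_edges, hrot₁.perm.length_eq, Walk.length_edges]
  · rw [← Walk.length_edges, hrot₂.perm.length_eq, Walk.length_edges]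
  · refine (hrot₁.nodup_iff.2 hc₁.edges_nodup).append (hrot₂.nodup_iff.2 hc₂.edges_nodup) ?_
    intro e he₁ he₂
    exact c₁.edges_disjoint_of_card_inter_support_le_one c₂ h.le
      (hrot₁.mem_iff.1 he₁) (hrot₂.mem_iff.1 he₂)

end SimpleGraph

section RandomGraph

variable {n : ℕ} {p : ℝ}

theorem bernoulliBool_singleton_true (p : ℝ) : bernoulliBool p {true} = ENNReal.ofReal p := by
  simp [bernoulliBool]

theorem isProbabilityMeasure_bernoulliBool (h0 : 0 ≤ p) (h1 : p ≤ 1) :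
    IsProbabilityMeasure (bernoulliBool p) := by
  constructor
  simp [bernoulliBool, ← ENNReal.ofReal_add h0 (sub_nonneg.2 h1)]

theorem isProbabilityMeasure_gnp (h0 : 0 ≤ p) (h1 : p ≤ 1) : IsProbabilityMeasure (gnp n p) :=
  have := isProbabilityMeasure_bernoulliBool h0 h1
  inferInstanceAs (IsProbabilityMeasure (Measure.pi _))

theorem gnp_forall_mem_eq_true (h0 : 0 ≤ p) (h1 : p ≤ 1) (S : Finset (Sym2 (Fin n))) :
    gnp n p {ω | ∀ e ∈ S, ω e = true} = ENNReal.ofReal p ^ #S := by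
  have := isProbabilityMeasure_bernoulliBool h0 h1
  have hpi : {ω : Sym2 (Fin n) → Bool | ∀ e ∈ S, ω e = true}
      = Set.univ.pi fun e => if e ∈ S then {true} else Set.univ := by
    ext ω
    simp only [Set.mem_pi, Set.mem_univ, true_implies]
    refine forall_congr' fun e => ?_
    split_ifs <;> simp [*]
  rw [hpi, gnp, Measure.pi_pi]
  simp only [apply_ite (bernoulliBool p), bernoulliBool_singleton_true, measure_univ]
  rw [Finset.prod_ite_mem, Finset.univ_inter, Finset.prod_const]

theorem gnp_nodup_forall_mem_eq_true_le (h0 : 0 ≤ p) (h1 : p ≤ 1) (l : List (Sym2 (Fin n))) :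
    gnp n p {ω | l.Nodup ∧ ∀ e ∈ l, ω e = true} ≤ ENNReal.ofReal p ^ l.length := by
  by_cases hl : l.Nodup
  · calc gnp n p {ω | l.Nodup ∧ ∀ e ∈ l, ω e = true}
        ≤ gnp n p {ω | ∀ e ∈ l.toFinset, ω e = true} :=
          measure_mono fun ω hω => by simpa using hω.2
      _ = ENNReal.ofReal p ^ l.length := by
          rw [gnp_forall_mem_eq_true h0 h1, List.toFinset_card_of_nodup hl]
  · simp [hl]

theorem eq_true_of_mem_edgeSet_graphOf {ω : Sym2 (Fin n) → Bool} {e : Sym2 (Fin n)}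
    (he : e ∈ (graphOf ω).edgeSet) : ω e = true := by
  induction e using Sym2.ind with
  | _ x y => exact he.2

-- The union bound is indexed by walks of the complete graph, so that the index set does not
-- depend on `ω`.
theorem setOf_hasShortCyclesSharingOneVertex_subset (L : ℝ) :
    {ω : Sym2 (Fin n) → Bool | (graphOf ω).HasShortCyclesSharingOneVertex L} ⊆
      ⋃ v, ⋃ d₁ ∈ (⊤ : SimpleGraph (Fin n)).finsetWalkLengthPosLE ⌊L⌋₊ v v,
        ⋃ d₂ ∈ (⊤ : SimpleGraph (Fin n)).finsetWalkLengthPosLE ⌊L⌋₊ v v,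
          {ω | (d₁.edges ++ d₂.edges).Nodup ∧ ∀ e ∈ d₁.edges ++ d₂.edges, ω e = true} := by
  rintro ω ⟨_, _, c₁, c₂, hc₁, hc₂, hL₁, hL₂, hcard⟩
  obtain ⟨v, d₁, d₂, hd₁, hd₂, hlen₁, hlen₂, hnodup⟩ :=
    exists_cycles_at_common_vertex hc₁ hc₂ hcard
  have hmem {d : (graphOf ω).Walk v v} (hd : d.IsCycle) (hL : (d.length : ℝ) ≤ L) :
      d.mapLe le_top ∈ (⊤ : SimpleGraph (Fin n)).finsetWalkLengthPosLE ⌊L⌋₊ v v := by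
    rw [mem_finsetWalkLengthPosLE_iff, Walk.length_mapLe]
    exact ⟨by linarith [hd.three_le_length], Nat.le_floor hL⟩
  simp only [Set.mem_iUnion]
  refine ⟨v, _, hmem hd₁ (by rwa [hlen₁]), _, hmem hd₂ (by rwa [hlen₂]), ?_⟩
  simp only [Set.mem_ofPred_eq, Walk.edges_mapLe_eq_edges]
  refine ⟨hnodup, fun e he => eq_true_of_mem_edgeSet_graphOf ?_⟩
  rcases List.mem_append.1 he with he | he
  · exact d₁.edges_subset_edgeSet he
  · exact d₂.edges_subset_edgeSet he

theorem gnp_hasShortCyclesSharingOneVertex_le (h0 : 0 ≤ p) (h1 : p ≤ 1) (L : ℝ) :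
    gnp n p {ω | (graphOf ω).HasShortCyclesSharingOneVertex L}
      ≤ n * (∑ k ∈ range ⌊L⌋₊, (n : ℝ≥0∞) ^ k * ENNReal.ofReal p ^ (k + 1)) ^ 2 := by
  set q := ENNReal.ofReal p
  set W := fun v : Fin n => (⊤ : SimpleGraph (Fin n)).finsetWalkLengthPosLE ⌊L⌋₊ v v
  calc gnp n p {ω | (graphOf ω).HasShortCyclesSharingOneVertex L}
      ≤ ∑ v, ∑ d₁ ∈ W v, ∑ d₂ ∈ W v,
          gnp n p {ω | (d₁.edges ++ d₂.edges).Nodup ∧ ∀ e ∈ d₁.edges ++ d₂.edges, ω e = true} :=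
        (measure_mono (setOf_hasShortCyclesSharingOneVertex_subset L)).trans <|
          (measure_iUnion_fintype_le _ _).trans <|
          Finset.sum_le_sum fun v _ => (measure_biUnion_finset_le _ _).trans <|
            Finset.sum_le_sum fun d₁ _ => measure_biUnion_finset_le _ _
    _ ≤ ∑ v, ∑ d₁ ∈ W v, ∑ d₂ ∈ W v, q ^ d₁.length * q ^ d₂.length := by
        gcongr with v _ d₁ _ d₂ _
        refine (gnp_nodup_forall_mem_eq_true_le h0 h1 _).trans_eq ?_
        rw [List.length_append, Walk.length_edges, Walk.length_edges, pow_add]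
    _ = ∑ v, (∑ d ∈ W v, q ^ d.length) ^ 2 := by
        simp only [← Finset.mul_sum, ← Finset.sum_mul, ← sq]
    _ ≤ ∑ _v : Fin n, (∑ k ∈ range ⌊L⌋₊, n ^ k * q ^ (k + 1)) ^ 2 := by
        gcongr with v
        simpa using sum_pow_length_finsetWalkLengthPosLE_le (G := ⊤) ⌊L⌋₊ v v q
    _ = _ := by simp

end RandomGraph

theorem sum_pow_mul_pow_succ_le {x y : ℝ} (hx : 0 < x) (hxy : 1 ≤ x * y) (M : ℕ) :
    ∑ k ∈ range M, x ^ k * y ^ (k + 1) ≤ M * (x * y) ^ M / x := by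
  have hterm : ∀ k ∈ range M, x ^ k * y ^ (k + 1) ≤ (x * y) ^ M / x := fun k hk => by
    rw [le_div_iff₀ hx, show x ^ k * y ^ (k + 1) * x = (x * y) ^ (k + 1) by ring]
    exact pow_le_pow_right₀ hxy (Finset.mem_range.1 hk)
  calc ∑ k ∈ range M, x ^ k * y ^ (k + 1) ≤ #(range M) • ((x * y) ^ M / x) :=
        Finset.sum_le_card_nsmul _ _ _ hterm
    _ = M * (x * y) ^ M / x := by rw [card_range, nsmul_eq_mul, mul_div_assoc]

theorem pow_two_mul_le_sqrt {X N : ℝ} (hX : 0 < X) (hN : 0 < N) {M : ℕ}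
    (hM : 4 * M * Real.log X ≤ Real.log N) : X ^ (2 * M) ≤ √N := by
  refine Real.le_sqrt_of_sq_le ?_
  calc (X ^ (2 * M)) ^ 2 = Real.exp (4 * M * Real.log X) := by
        rw [← Real.exp_log (pow_pos (pow_pos hX _) 2), Real.log_pow, Real.log_pow]
        push_cast; ring_nf
    _ ≤ N := by rwa [← Real.exp_le_exp, Real.exp_log hN] at hM

theorem tendsto_log_sq_div_sqrt : Tendsto (fun n : ℕ => Real.log n ^ 2 / √n) atTop (𝓝 0) := by
  have h := (isLittleO_log_rpow_rpow_atTop 2 (by norm_num : (0:ℝ) < 1/2)).tendsto_div_nhds_zero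
  have h' : Tendsto (fun x : ℝ => Real.log x ^ 2 / √x) atTop (𝓝 0) := h.congr fun x => by
    rw [Real.sqrt_eq_rpow, show (2 : ℝ) = ((2 : ℕ) : ℝ) by norm_num, Real.rpow_natCast]
  exact h'.comp tendsto_natCast_atTop_atTop

theorem gnp_hasShortCyclesSharingOneVertex_le_log_sq_div_sqrt {n : ℕ} {p : ℝ}
    (hX : 3 ≤ n * p) (hp1 : p ≤ 1) :
    gnp n p {ω | (graphOf ω).HasShortCyclesSharingOneVertex (Real.log n / (4 * Real.log (n * p)))}
      ≤ ENNReal.ofReal (Real.log n ^ 2 / √n) := by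
  have hn : (0 : ℝ) < n :=
    (Nat.cast_nonneg n).lt_of_ne fun h => by rw [← h, zero_mul] at hX; norm_num at hX
  have hp0 : 0 < p := pos_of_mul_pos_right (by linarith) hn.le
  have hlogX : 1 ≤ Real.log (n * p) := by
    rw [Real.le_log_iff_exp_le (by linarith)]
    linarith [Real.exp_one_lt_d9]
  have hlogn : 0 ≤ Real.log n := Real.log_natCast_nonneg n
  set L := Real.log n / (4 * Real.log (n * p)) with hL
  set M := ⌊L⌋₊
  have hML : (M : ℝ) ≤ L := Nat.floor_le (by positivity)
  have hMlog : (M : ℝ) ≤ Real.log n := hML.trans (div_le_self hlogn (by linarith))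
  have hM4 : 4 * M * Real.log (n * p) ≤ Real.log n := by
    calc 4 * M * Real.log (n * p) ≤ 4 * L * Real.log (n * p) := by gcongr
      _ = Real.log n := by rw [hL]; field_simp
  have hsum := sum_pow_mul_pow_succ_le (y := p) hn (by linarith) M
  have hsum0 : 0 ≤ ∑ k ∈ range M, (n : ℝ) ^ k * p ^ (k + 1) := by positivity
  calc gnp n p {ω | (graphOf ω).HasShortCyclesSharingOneVertex L}
      ≤ n * (∑ k ∈ range M, (n : ℝ≥0∞) ^ k * ENNReal.ofReal p ^ (k + 1)) ^ 2 :=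
        gnp_hasShortCyclesSharingOneVertex_le hp0.le hp1 L
    _ = ENNReal.ofReal (n * (∑ k ∈ range M, (n : ℝ) ^ k * p ^ (k + 1)) ^ 2) := by
        rw [ENNReal.ofReal_mul hn.le, ENNReal.ofReal_pow hsum0,
          ENNReal.ofReal_sum_of_nonneg fun _ _ => by positivity]
        simp [ENNReal.ofReal_mul, ENNReal.ofReal_pow, hp0.le]
    _ ≤ ENNReal.ofReal (Real.log n ^ 2 / √n) := by
        refine ENNReal.ofReal_le_ofReal ?_
        have hsqrt : √(n : ℝ) * √n = n := Real.mul_self_sqrt hn.le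
        calc (n : ℝ) * (∑ k ∈ range M, (n : ℝ) ^ k * p ^ (k + 1)) ^ 2
            ≤ n * (M * (n * p) ^ M / n) ^ 2 := by gcongr
          _ = M ^ 2 * (n * p) ^ (2 * M) / n := by field_simp; ring
          _ ≤ Real.log n ^ 2 * √n / n := by
              gcongr
              exact pow_two_mul_le_sqrt (by linarith) hn hM4
          _ = Real.log n ^ 2 / √n := by
              rw [div_eq_div_iff hn.ne' (by positivity), mul_assoc, hsqrt]

theorem eventually_three_le_mul {w : ℕ → ℝ} (hw : Tendsto w atTop atTop) {p : ℕ → ℝ}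
    (hp : ∀ n : ℕ, (Real.log n + Real.log (Real.log n) + w n) / (n : ℝ) ≤ p n) :
    ∀ᶠ n : ℕ in atTop, 3 ≤ n * p n := by
  have hlog := Real.tendsto_log_atTop.comp tendsto_natCast_atTop_atTop
  filter_upwards [hw.eventually_ge_atTop 0, hlog.eventually_ge_atTop 3,
    eventually_gt_atTop 0] with n hw hlog hn
  simp only [Function.comp_apply] at hlog
  have hloglog : 0 ≤ Real.log (Real.log n) := Real.log_nonneg (by linarith)
  have := (div_le_iff₀' (Nat.cast_pos.2 hn)).1 (hp n)
  linarith

theorem eventually_le_one {p : ℕ → ℝ} (hp : ∀ n : ℕ, p n ≤ 10 * Real.log n / (n : ℝ)) :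
    ∀ᶠ n : ℕ in atTop, p n ≤ 1 := by
  have h := (Real.isLittleO_log_id_atTop.comp_tendsto tendsto_natCast_atTop_atTop).def
    (by norm_num : (0 : ℝ) < 1 / 10)
  filter_upwards [h, eventually_gt_atTop 0] with n h hn
  have hn' : (0 : ℝ) < n := Nat.cast_pos.2 hn
  simp only [Function.comp_apply, id, Real.norm_eq_abs, abs_of_pos hn'] at h
  calc p n ≤ 10 * Real.log n / n := hp n
    _ ≤ 1 := by rw [div_le_one hn']; linarith [le_abs_self (Real.log n)]

theorem statement5 (w : ℕ → ℝ) (hw : Tendsto w atTop atTop) (p : ℕ → ℝ)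
    (hp : ∀ n : ℕ,
      (Real.log n + Real.log (Real.log n) + w n) / (n : ℝ) ≤ p n ∧
        p n ≤ 10 * Real.log n / (n : ℝ)) :
    Tendsto (fun n : ℕ => gnp n (p n)
      {ω | ¬ ∃ (a b : Fin n) (c₁ : (graphOf ω).Walk a a) (c₂ : (graphOf ω).Walk b b),
          c₁.IsCycle ∧ c₂.IsCycle ∧
          (c₁.length : ℝ) ≤ Real.log n / (4 * Real.log ((n : ℝ) * p n)) ∧
          (c₂.length : ℝ) ≤ Real.log n / (4 * Real.log ((n : ℝ) * p n)) ∧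
          (c₁.support.toFinset ∩ c₂.support.toFinset).card = 1})
      atTop (nhds 1) := by
  set L : ℕ → ℝ := fun n => Real.log n / (4 * Real.log ((n : ℝ) * p n))
  change Tendsto (fun n : ℕ => gnp n (p n)
    {ω | (graphOf ω).HasShortCyclesSharingOneVertex (L n)}ᶜ) atTop (𝓝 1)
  have hX := eventually_three_le_mul hw fun n => (hp n).1
  have hp1 := eventually_le_one fun n => (hp n).2
  have hbad : Tendsto (fun n : ℕ => gnp n (p n)
      {ω | (graphOf ω).HasShortCyclesSharingOneVertex (L n)}) atTop (𝓝 0) := by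
    refine tendsto_of_tendsto_of_tendsto_of_le_of_le' tendsto_const_nhds
      (by simpa using ENNReal.tendsto_ofReal tendsto_log_sq_div_sqrt)
      (.of_forall fun _ => zero_le) ?_
    filter_upwards [hX, hp1] with n hX hp1
    exact gnp_hasShortCyclesSharingOneVertex_le_log_sq_div_sqrt hX hp1
  have hcompl : ∀ᶠ n : ℕ in atTop,
      1 - gnp n (p n) {ω | (graphOf ω).HasShortCyclesSharingOneVertex (L n)}
        = gnp n (p n) {ω | (graphOf ω).HasShortCyclesSharingOneVertex (L n)}ᶜ := by
    filter_upwards [hX, hp1] with n hX hp1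
    have hp0 : 0 ≤ p n := (pos_of_mul_pos_right (by linarith) n.cast_nonneg).le
    have := isProbabilityMeasure_gnp (n := n) hp0 hp1
    exact (prob_compl_eq_one_sub (Set.toFinite _).measurableSet).symm
  refine Tendsto.congr' hcompl ?_
  simpa using ENNReal.Tendsto.sub tendsto_const_nhds hbad (.inl ENNReal.one_ne_top)
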